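/- arXiv:1909.12379 — 2 statements merged into one kernel-verified Lean document; each statement's English description precedes it below -/
import Mathlib

section
/- Let G be a symmetric directed graph with maximum in-degree Δ_G > 0, and let H be its radio conflict graph. Then the maximum in-degree of H satisfies Δ_in^H ≤ Δ_G² + Δ_G − 1. -/
/-- For a symmetric directed graph G (adjacency A) with maximum in-degree Δ_G > 0, the
in-degree of any vertex of the radio conflict graph H is at most Δ_G² + Δ_G − 1.
A link e' = (u',v') blocks e = (u,v) iff (u' = u ∧ v' ≠ v), or u' = v, or
(u' ≠ u and u' is an in-neighbor of v). -/
theorem conflict_graph_indegree_bound (V : Type) [Fintype V] [DecidableEq V]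
    (A : V → V → Prop) [DecidableRel A]
    (hsym : ∀ u v, A u v → A v u) (hirr : ∀ v, ¬ A v v)
    (ΔG : ℕ)
    (hΔ : ΔG = Finset.univ.sup fun v => (Finset.univ.filter fun u => A u v).card)
    (hpos : 0 < ΔG) :
    ∀ e : V × V, A e.1 e.2 →
      ((Finset.univ.filter fun e' : V × V =>
          A e'.1 e'.2 ∧
            ((e'.1 = e.1 ∧ e'.2 ≠ e.2) ∨ e'.1 = e.2 ∨ (e'.1 ≠ e.1 ∧ A e'.1 e.2))).card
        ≤ ΔG ^ 2 + ΔG - 1) := by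
  rintro ⟨u, v⟩ he
  simp only at he ⊢
  have hin : ∀ w : V, (Finset.univ.filter fun x => A x w).card ≤ ΔG := by
    intro w
    rw [hΔ]
    exact Finset.le_sup (f := fun v => (Finset.univ.filter fun u => A u v).card) (Finset.mem_univ w)
  have hout : ∀ w : V, (Finset.univ.filter fun x => A w x).card ≤ ΔG := by
    intro w
    have hEq : (Finset.univ.filter fun x => A w x) = (Finset.univ.filter fun x => A x w) := by
      apply Finset.filter_congr
      intro x _
      exact ⟨fun h => hsym _ _ h, fun h => hsym _ _ h⟩
    rw [hEq]; exact hin w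
  set S1 := ({u} : Finset V) ×ˢ ((Finset.univ.filter fun x => A u x).erase v) with hS1
  set S2 := ({v} : Finset V) ×ˢ (Finset.univ.filter fun x => A v x) with hS2
  set S3 := ((Finset.univ.filter fun x => A x v).erase u).biUnion
      (fun w => ({w} : Finset V) ×ˢ (Finset.univ.filter fun x => A w x)) with hS3
  have hsub : (Finset.univ.filter fun e' : V × V =>
          A e'.1 e'.2 ∧
            ((e'.1 = u ∧ e'.2 ≠ v) ∨ e'.1 = v ∨ (e'.1 ≠ u ∧ A e'.1 v))) ⊆ S1 ∪ S2 ∪ S3 := by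
    rintro ⟨a, b⟩ hmem
    simp only [Finset.mem_filter, Finset.mem_univ, true_and] at hmem
    obtain ⟨hab, hcase⟩ := hmem
    simp only [hS1, hS2, hS3, Finset.mem_union, Finset.mem_product, Finset.mem_singleton,
      Finset.mem_erase, Finset.mem_filter, Finset.mem_univ, true_and, Finset.mem_biUnion]
    rcases hcase with ⟨h1, h2⟩ | h1 | ⟨h1, h2⟩
    · exact Or.inl (Or.inl ⟨h1, h2, h1 ▸ hab⟩)
    · exact Or.inl (Or.inr ⟨h1, h1 ▸ hab⟩)
    · exact Or.inr ⟨a, ⟨h1, h2⟩, rfl, hab⟩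
  have hc1 : S1.card ≤ ΔG - 1 := by
    rw [hS1, Finset.card_product, Finset.card_singleton, one_mul,
      Finset.card_erase_of_mem (by simp [he])]
    exact Nat.sub_le_sub_right (hout u) 1
  have hc2 : S2.card ≤ ΔG := by
    rw [hS2, Finset.card_product, Finset.card_singleton, one_mul]
    exact hout v
  have hc3 : S3.card ≤ (ΔG - 1) * ΔG := by
    refine le_trans (Finset.card_biUnion_le) ?_
    refine le_trans (Finset.sum_le_card_nsmul _ _ ΔG ?_) ?_
    · intro w _
      rw [Finset.card_product, Finset.card_singleton, one_mul]
      exact hout w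
    · simp only [smul_eq_mul]
      apply Nat.mul_le_mul_right
      rw [Finset.card_erase_of_mem (by simp [he])]
      exact Nat.sub_le_sub_right (hin v) 1
  have htotal : (Finset.univ.filter fun e' : V × V =>
          A e'.1 e'.2 ∧
            ((e'.1 = u ∧ e'.2 ≠ v) ∨ e'.1 = v ∨ (e'.1 ≠ u ∧ A e'.1 v))).card
        ≤ (ΔG - 1) + ΔG + (ΔG - 1) * ΔG := by
    calc _ ≤ (S1 ∪ S2 ∪ S3).card := Finset.card_le_card hsub
    _ ≤ (S1 ∪ S2).card + S3.card := Finset.card_union_le _ _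
    _ ≤ S1.card + S2.card + S3.card := by
        exact Nat.add_le_add_right (Finset.card_union_le _ _) _
    _ ≤ (ΔG - 1) + ΔG + (ΔG - 1) * ΔG := by
        exact Nat.add_le_add (Nat.add_le_add hc1 hc2) hc3
  refine le_trans htotal ?_
  obtain ⟨k, rfl⟩ : ∃ k, ΔG = k + 1 := ⟨ΔG - 1, by omega⟩
  simp only [Nat.add_sub_cancel]
  have h2 : (k+1)^2 + (k+1) - 1 = (k+1)^2 + k := by omega
  rw [h2]
  exact le_of_eq (by ring)
end

section
/- Let k ≤ n be positive integers, t ≥ 1, P = (1/k)(1−1/k)^(k−1), 0 < ε < kP, and δ = (kP−ε)/(kP). If k·C(n,k)·exp(−P·t·δ²/2) < 1, then there exists a t × n boolean matrix M such that for every choice of k columns j₁,…,j_k, at least ε·t/k rows i satisfy M_{i,j₁} = 1 and M_{i,j₂} = ⋯ = M_{i,j_k} = 0. -/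
open Finset Real

lemma mul_log_lower {u : ℝ} (hu0 : 0 < u) (hu1 : u ≤ 1) : (u^2 - 1)/2 ≤ u * Real.log u := by
  have hd : ∀ x : ℝ, 0 < x →
      HasDerivAt (fun x : ℝ => x * Real.log x - (x^2-1)/2) (Real.log x + 1 - x) x := by
    intro x hx0
    have := (Real.hasDerivAt_mul_log hx0.ne').sub
      (((hasDerivAt_pow 2 x).sub_const 1).div_const 2)
    refine this.congr_deriv ?_
    norm_num
  have key : AntitoneOn (fun x : ℝ => x * Real.log x - (x^2-1)/2) (Set.Icc u 1) := by
    apply antitoneOn_of_deriv_nonpos (convex_Icc u 1)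
    · fun_prop (disch := intro x hx; nlinarith [hx.1, hu0])
    · intro x hx
      rw [interior_Icc] at hx
      exact (hd x (hu0.trans hx.1)).differentiableAt.differentiableWithinAt
    · intro x hx
      rw [interior_Icc] at hx
      have hx0 : 0 < x := hu0.trans hx.1
      rw [(hd x hx0).deriv]
      have := Real.log_le_sub_one_of_pos hx0
      linarith
  have := key (Set.left_mem_Icc.2 hu1) (Set.right_mem_Icc.2 hu1) hu1
  simp at this
  linarith

lemma key_ineq {δ : ℝ} (h0 : 0 ≤ δ) (h1 : δ < 1) : δ^2/2 ≤ δ + (1-δ) * Real.log (1-δ) := by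
  have := mul_log_lower (u := 1 - δ) (by linarith) (by linarith)
  nlinarith [this]

lemma chernoff_tail (t : ℕ) (p δ : ℝ) (hp0 : 0 < p) (hp1 : p ≤ 1) (hδ0 : 0 < δ) (hδ1 : δ < 1) :
    ∑ s ∈ (Finset.range (t+1)).filter (fun s : ℕ => (s:ℝ) < (1-δ)*p*t),
      (t.choose s : ℝ) * p^s * (1-p)^(t-s) ≤ Real.exp (-(p * t * δ^2/2)) := by
  set m : ℝ := (1-δ)*p*t with hm
  have hb0 : (0:ℝ) < 1 - δ := by linarith
  have hb1 : (1:ℝ) - δ < 1 := by linarith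
  have hq0 : (0:ℝ) ≤ 1 - p := by linarith
  have ht0 : (0:ℝ) ≤ (t:ℝ) := Nat.cast_nonneg t
  have hm0 : 0 ≤ m := by positivity
  calc ∑ s ∈ (Finset.range (t+1)).filter (fun s : ℕ => (s:ℝ) < m),
        (t.choose s : ℝ) * p^s * (1-p)^(t-s)
      ≤ ∑ s ∈ (Finset.range (t+1)).filter (fun s : ℕ => (s:ℝ) < m),
        (1-δ) ^ (-m) * ((t.choose s : ℝ) * ((1-δ)*p)^s * (1-p)^(t-s)) := by
        apply Finset.sum_le_sum
        intro s hs
        rw [Finset.mem_filter] at hs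
        have hsm : (s:ℝ) ≤ m := hs.2.le
        have h1 : (1:ℝ) ≤ (1-δ) ^ ((s:ℝ) - m) :=
          Real.one_le_rpow_of_pos_of_le_one_of_nonpos hb0 hb1.le (by linarith)
        have expand : (1-δ) ^ (-m) * ((t.choose s : ℝ) * ((1-δ)*p)^s * (1-p)^(t-s))
            = ((1-δ) ^ ((s:ℝ) - m)) * ((t.choose s : ℝ) * p^s * (1-p)^(t-s)) := by
          rw [mul_pow, show ((s:ℝ) - m) = -m + s by ring, Real.rpow_add hb0,
            Real.rpow_natCast]
          ring
        rw [expand]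
        exact le_mul_of_one_le_left (by positivity) h1
    _ ≤ ∑ s ∈ Finset.range (t+1),
        (1-δ) ^ (-m) * ((t.choose s : ℝ) * ((1-δ)*p)^s * (1-p)^(t-s)) :=
        Finset.sum_le_sum_of_subset_of_nonneg (Finset.filter_subset _ _)
          (by intro s _ _; positivity)
    _ = (1-δ) ^ (-m) * ((1-δ)*p + (1-p))^t := by
        rw [← Finset.mul_sum, add_pow]
        congr 1
        apply Finset.sum_congr rfl
        intro s _
        ring
    _ ≤ (1-δ) ^ (-m) * Real.exp (-(p*δ)) ^ t := by
        apply mul_le_mul_of_nonneg_left _ (by positivity)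
        apply pow_le_pow_left₀ (by nlinarith)
        have := Real.add_one_le_exp (-(p*δ))
        linarith
    _ = Real.exp (-(m * Real.log (1-δ))) * Real.exp (-(p*δ)*t) := by
        rw [← Real.exp_nat_mul, Real.rpow_def_of_pos hb0]
        ring_nf
    _ = Real.exp (-(p * t * ((1-δ) * Real.log (1-δ) + δ))) := by
        rw [← Real.exp_add]
        congr 1
        rw [hm]
        ring
    _ ≤ Real.exp (-(p * t * δ^2/2)) := by
        apply Real.exp_le_exp.2
        have hk := key_ineq hδ0.le hδ1
        have hpt : 0 ≤ p * t := by positivity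
        nlinarith [mul_le_mul_of_nonneg_left hk hpt]

variable {R : Type*} [Fintype R] [DecidableEq R]

lemma count_fiber (t : ℕ) (G : Finset R) (A : Finset (Fin t)) :
    ((Finset.univ : Finset (Fin t → R)).filter
        (fun f => Finset.univ.filter (fun i => f i ∈ G) = A)).card
      = G.card ^ A.card * (Gᶜ.card) ^ (t - A.card) := by
  have hset : (Finset.univ : Finset (Fin t → R)).filter
        (fun f => Finset.univ.filter (fun i => f i ∈ G) = A)
      = Fintype.piFinset (fun i => if i ∈ A then G else Gᶜ) := by
    ext f
    simp only [Finset.mem_filter, Finset.mem_univ, true_and, Fintype.mem_piFinset,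
      Finset.ext_iff]
    constructor
    · intro h i
      by_cases hi : i ∈ A
      · simp only [if_pos hi]
        have := (h i).mpr hi
        simpa using this
      · simp only [if_neg hi, Finset.mem_compl]
        intro hg
        exact hi ((h i).mp (by simpa using hg))
    · intro h i
      have := h i
      by_cases hi : i ∈ A
      · simp only [if_pos hi] at this
        simp [hi, this]
      · simp only [if_neg hi, Finset.mem_compl] at this
        simp [hi, this]
  rw [hset, Fintype.card_piFinset]
  rw [← Finset.prod_mul_prod_compl A]
  have h1 : ∏ i ∈ A, (if i ∈ A then G else Gᶜ).card = G.card ^ A.card := by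
    rw [Finset.prod_congr rfl (fun i hi => by rw [if_pos hi]), Finset.prod_const]
  have h2 : ∏ i ∈ Aᶜ, (if i ∈ A then G else Gᶜ).card = Gᶜ.card ^ (t - A.card) := by
    rw [Finset.prod_congr rfl (fun i hi => by rw [if_neg (Finset.mem_compl.mp hi)]),
      Finset.prod_const]
    congr 1
    simp [Finset.card_compl]
  rw [h1, h2]

lemma count_exact (t s : ℕ) (G : Finset R) :
    ((Finset.univ : Finset (Fin t → R)).filter
        (fun f => (Finset.univ.filter (fun i => f i ∈ G)).card = s)).card
      = t.choose s * G.card ^ s * (Gᶜ.card) ^ (t - s) := by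
  rw [Finset.card_eq_sum_card_fiberwise
    (f := fun f : Fin t → R => Finset.univ.filter (fun i => f i ∈ G))
    (t := Finset.powersetCard s Finset.univ)
    (by intro f hf
        rw [Finset.mem_coe, Finset.mem_filter] at hf
        rw [Finset.mem_coe, Finset.mem_powersetCard_univ]
        exact hf.2)]
  have : ∀ A ∈ Finset.powersetCard s (Finset.univ : Finset (Fin t)),
      ((Finset.univ : Finset (Fin t → R)).filter
        (fun f => (Finset.univ.filter (fun i => f i ∈ G)).card = s) |>.filter
        (fun f => Finset.univ.filter (fun i => f i ∈ G) = A)).card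
      = G.card ^ s * Gᶜ.card ^ (t - s) := by
    intro A hA
    rw [Finset.mem_powersetCard_univ] at hA
    rw [Finset.filter_filter]
    have : ∀ f : Fin t → R, ((Finset.univ.filter (fun i => f i ∈ G)).card = s ∧
        Finset.univ.filter (fun i => f i ∈ G) = A) ↔
        Finset.univ.filter (fun i => f i ∈ G) = A := by
      intro f
      constructor
      · exact And.right
      · intro h; exact ⟨by rw [h, hA], h⟩
    rw [Finset.filter_congr (fun f _ => this f), count_fiber t G A, hA]
  rw [Finset.sum_congr rfl this, Finset.sum_const, Finset.card_powersetCard,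
    Finset.card_univ, Fintype.card_fin, smul_eq_mul, mul_assoc]

lemma count_bad {R : Type*} [Fintype R] [DecidableEq R] (t : ℕ) (G : Finset R) (m : ℝ) :
    ((Finset.univ : Finset (Fin t → R)).filter
        (fun f => ((Finset.univ.filter (fun i => f i ∈ G)).card : ℝ) < m)).card
      = ∑ s ∈ (Finset.range (t+1)).filter (fun s : ℕ => (s:ℝ) < m),
          t.choose s * G.card ^ s * (Gᶜ.card) ^ (t - s) := by
  rw [Finset.card_eq_sum_card_fiberwise
    (f := fun f : Fin t → R => (Finset.univ.filter (fun i => f i ∈ G)).card)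
    (t := (Finset.range (t+1)).filter (fun s : ℕ => (s:ℝ) < m))
    (by intro f hf
        rw [Finset.mem_coe, Finset.mem_filter] at hf ⊢
        refine ⟨Finset.mem_range_succ_iff.2 ?_, hf.2⟩
        exact (Finset.card_filter_le _ _).trans (by simp))]
  apply Finset.sum_congr rfl
  intro s hs
  rw [Finset.mem_filter] at hs
  rw [← count_exact t s G]
  congr 1
  rw [Finset.filter_filter]
  apply Finset.filter_congr
  intro f _
  constructor
  · exact And.right
  · intro h; exact ⟨by rw [h]; exact hs.2, h⟩

lemma count_bad_le {R : Type*} [Fintype R] [DecidableEq R] (t : ℕ) (G : Finset R)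
    (p δ : ℝ) (hp0 : 0 < p) (hp1 : p ≤ 1) (hδ0 : 0 < δ) (hδ1 : δ < 1)
    (hR : 0 < Fintype.card R)
    (hG : (G.card : ℝ) = p * (Fintype.card R : ℝ)) :
    (((Finset.univ : Finset (Fin t → R)).filter
        (fun f => ((Finset.univ.filter (fun i => f i ∈ G)).card : ℝ) < (1-δ)*p*t)).card : ℝ)
      ≤ Real.exp (-(p * t * δ^2/2)) * (Fintype.card R : ℝ)^t := by
  rw [count_bad]
  push_cast
  set N : ℝ := (Fintype.card R : ℝ) with hN
  have hN0 : (0:ℝ) < N := by rw [hN]; exact_mod_cast hR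
  have hGc : (Gᶜ.card : ℝ) = (1-p) * N := by
    rw [Finset.card_compl]
    push_cast [Finset.card_le_univ G, Finset.card_univ]
    linarith
  have key : ∀ s ∈ (Finset.range (t+1)).filter (fun s : ℕ => (s:ℝ) < (1-δ)*p*t),
      (t.choose s : ℝ) * (G.card:ℝ) ^ s * ((Gᶜ.card:ℝ)) ^ (t - s)
      = ((t.choose s : ℝ) * p^s * (1-p)^(t-s)) * N^t := by
    intro s hs
    rw [Finset.mem_filter, Finset.mem_range_succ_iff] at hs
    rw [hG, hGc, mul_pow, mul_pow]
    have : N ^ s * N ^ (t - s) = N ^ t := by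
      rw [← pow_add]
      congr 1
      omega
    rw [show (t.choose s : ℝ) * (p ^ s * N ^ s) * ((1-p) ^ (t-s) * N ^ (t-s))
      = (t.choose s : ℝ) * p ^ s * (1-p) ^ (t-s) * (N ^ s * N ^ (t-s)) by ring, this]
  rw [Finset.sum_congr rfl key, ← Finset.sum_mul]
  apply mul_le_mul_of_nonneg_right _ (by positivity)
  exact chernoff_tail t p δ hp0 hp1 hδ0 hδ1

lemma G_card (n k : ℕ) (x : Fin n) (S : Finset (Fin n)) (hx : x ∉ S) (z0 : Fin k) :
    ((Finset.univ : Finset (Fin n → Fin k)).filter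
        (fun r => r x = z0 ∧ ∀ y ∈ S, r y ≠ z0)).card
      = (k-1) ^ S.card * k ^ (n - 1 - S.card) := by
  classical
  set T : Fin n → Finset (Fin k) := fun y =>
    if y = x then {z0} else if y ∈ S then {z0}ᶜ else Finset.univ with hT
  have hset : (Finset.univ : Finset (Fin n → Fin k)).filter
        (fun r => r x = z0 ∧ ∀ y ∈ S, r y ≠ z0) = Fintype.piFinset T := by
    ext r
    simp only [Finset.mem_filter, Finset.mem_univ, true_and, Fintype.mem_piFinset, hT]
    constructor
    · intro ⟨h1, h2⟩ y
      by_cases hyx : y = x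
      · simp [hyx, h1]
      · by_cases hyS : y ∈ S
        · simp [hyx, hyS, h2 y hyS]
        · simp [hyx, hyS]
    · intro h
      constructor
      · have := h x
        simpa using this
      · intro y hyS
        have := h y
        have hyx : y ≠ x := fun e => hx (e ▸ hyS)
        simpa [hyx, hyS] using this
  rw [hset, Fintype.card_piFinset]
  rw [← Finset.prod_mul_prod_compl (insert x S)]
  have h1 : ∏ y ∈ insert x S, (T y).card = (k-1) ^ S.card := by
    rw [Finset.prod_insert hx]
    have hx' : (T x).card = 1 := by simp [hT]
    have hS' : ∀ y ∈ S, (T y).card = k - 1 := by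
      intro y hy
      have hyx : y ≠ x := fun e => hx (e ▸ hy)
      simp [hT, hyx, hy, Finset.card_compl]
    rw [hx', Finset.prod_congr rfl hS', Finset.prod_const, one_mul]
  have h2 : ∏ y ∈ (insert x S)ᶜ, (T y).card = k ^ (n - 1 - S.card) := by
    have hc : ∀ y ∈ (insert x S)ᶜ, (T y).card = k := by
      intro y hy
      rw [Finset.mem_compl, Finset.mem_insert] at hy
      push_neg at hy
      simp [hT, hy.1, hy.2]
    rw [Finset.prod_congr rfl hc, Finset.prod_const, Finset.card_compl,
      Finset.card_insert_of_notMem hx]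
    congr 1
    simp
    omega
  rw [h1, h2]

/-- The probabilistic-method step: if k·C(n,k)·exp(−P·t·δ²/2) < 1, with
P = (1/k)(1−1/k)^(k−1), 0 < ε < kP and δ = (kP−ε)/(kP), then there exists a t × n
boolean matrix M such that for every choice of k distinct columns j₁,…,j_k, at least
ε·t/k rows i satisfy M_{i,j₁} = 1 and M_{i,j₂} = ⋯ = M_{i,j_k} = 0. -/
theorem selector_matrix_exists (n k t : ℕ) (hk : 0 < k) (hkn : k ≤ n) (ht : 1 ≤ t)
    (ε P δ : ℝ)
    (hP : P = (1 / (k : ℝ)) * (1 - 1 / (k : ℝ)) ^ (k - 1))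
    (hε0 : 0 < ε) (hε : ε < k * P)
    (hδ : δ = ((k : ℝ) * P - ε) / ((k : ℝ) * P))
    (hcond : (k : ℝ) * (n.choose k : ℝ) * Real.exp (-(P * t * δ ^ 2 / 2)) < 1) :
    ∃ M : Fin t → Fin n → Bool,
      ∀ c : Fin k → Fin n, Function.Injective c →
        ε * t / k ≤
          ((Finset.univ.filter fun i : Fin t =>
              M i (c ⟨0, hk⟩) = true ∧
                ∀ j : Fin k, j ≠ ⟨0, hk⟩ → M i (c j) = false).card : ℝ) := by
  classical
  have hkR : (0:ℝ) < k := by exact_mod_cast hk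
  have hkR1 : (1:ℝ) ≤ k := by exact_mod_cast hk
  have hkP : (0:ℝ) < k * P := hε0.trans hε
  have hP0 : 0 < P := by nlinarith
  have hP1 : P ≤ 1 := by
    have hb0 : (0:ℝ) ≤ 1 - 1/(k:ℝ) := by
      rw [sub_nonneg]
      rw [div_le_one hkR]
      exact hkR1
    have hple : (1 - 1/(k:ℝ)) ^ (k-1) ≤ 1 := pow_le_one₀ hb0 (by nlinarith [one_div_pos.2 hkR])
    have h1k : 1/(k:ℝ) ≤ 1 := by rw [div_le_one hkR]; exact hkR1
    rw [hP]
    nlinarith [one_div_pos.2 hkR]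
  have hδ0 : 0 < δ := by rw [hδ]; apply div_pos (by linarith) hkP
  have hδ1 : δ < 1 := by rw [hδ, div_lt_one hkP]; linarith
  have hmeq : (1-δ)*P*(t:ℝ) = ε*t/k := by
    rw [hδ]
    field_simp
    ring
  set z0 : Fin k := ⟨0, hk⟩ with hz0
  have hNcard : Fintype.card (Fin n → Fin k) = k ^ n := by simp
  have hNpos : 0 < Fintype.card (Fin n → Fin k) := by rw [hNcard]; exact pow_pos hk n
  set Gp : (Σ _ : Finset (Fin n), Fin n) → Finset (Fin n → Fin k) := fun pr =>
    Finset.univ.filter (fun r => r pr.2 = z0 ∧ ∀ y ∈ pr.1.erase pr.2, r y ≠ z0) with hGp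
  set Bad : (Σ _ : Finset (Fin n), Fin n) → Finset (Fin t → Fin n → Fin k) := fun pr =>
    Finset.univ.filter
      (fun f => ((Finset.univ.filter (fun i => f i ∈ Gp pr)).card : ℝ) < (1-δ)*P*t) with hBad
  set Pairs : Finset (Σ _ : Finset (Fin n), Fin n) :=
    (Finset.powersetCard k (Finset.univ : Finset (Fin n))).sigma (fun S' => S') with hPairs
  -- card of Gp for pairs
  have hGcard : ∀ pr ∈ Pairs, ((Gp pr).card : ℝ) = P * (Fintype.card (Fin n → Fin k) : ℝ) := by
    intro pr hpr
    rw [hPairs, Finset.mem_sigma] at hpr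
    obtain ⟨hS', hx⟩ := hpr
    rw [Finset.mem_powersetCard_univ] at hS'
    have hxe : pr.2 ∉ pr.1.erase pr.2 := Finset.notMem_erase _ _
    have hce : (pr.1.erase pr.2).card = k - 1 := by
      rw [Finset.card_erase_of_mem hx, hS']
    rw [hGp]
    rw [G_card n k pr.2 (pr.1.erase pr.2) hxe z0, hce, hNcard]
    have he2 : n - 1 - (k-1) = n - k := by omega
    rw [he2]
    have hcast : ((k-1:ℕ):ℝ) = (k:ℝ) - 1 := by
      rw [Nat.cast_sub hk, Nat.cast_one]
    push_cast [hcast]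
    have h1 : (1 : ℝ) - 1/(k:ℝ) = ((k:ℝ)-1)/(k:ℝ) := by field_simp
    have e1 : (k:ℝ)^n = (k:ℝ)^(n-k) * (k:ℝ)^(k-1) * (k:ℝ) := by
      rw [mul_assoc, ← pow_succ, ← pow_add]
      congr 1
      omega
    rw [hP, h1, div_pow, e1]
    field_simp
  -- bound each Bad
  have hBadle : ∀ pr ∈ Pairs, ((Bad pr).card : ℝ)
      ≤ Real.exp (-(P * t * δ^2/2)) * (Fintype.card (Fin n → Fin k) : ℝ)^t := by
    intro pr hpr
    exact count_bad_le t (Gp pr) P δ hP0 hP1 hδ0 hδ1 hNpos (hGcard pr hpr)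
  -- card of Pairs
  have hPairscard : Pairs.card = n.choose k * k := by
    rw [hPairs, Finset.card_sigma]
    rw [Finset.sum_congr rfl (fun S' hS' => Finset.mem_powersetCard_univ.mp hS'),
      Finset.sum_const, Finset.card_powersetCard, Finset.card_univ, Fintype.card_fin,
      smul_eq_mul]
  -- union bound
  set NR : ℝ := (Fintype.card (Fin n → Fin k) : ℝ) with hNR
  have hNR0 : (0:ℝ) < NR := by rw [hNR]; exact_mod_cast hNpos
  have hlt : ((Pairs.biUnion Bad).card : ℝ) < NR ^ t := by
    calc ((Pairs.biUnion Bad).card : ℝ) ≤ ∑ pr ∈ Pairs, ((Bad pr).card : ℝ) := by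
          exact_mod_cast Nat.cast_le.2 (Finset.card_biUnion_le)
      _ ≤ ∑ pr ∈ Pairs, Real.exp (-(P * t * δ^2/2)) * NR^t :=
          Finset.sum_le_sum hBadle
      _ = ((n.choose k * k : ℕ) : ℝ) * (Real.exp (-(P * t * δ^2/2)) * NR^t) := by
          rw [Finset.sum_const, hPairscard, nsmul_eq_mul]
      _ = ((k:ℝ) * (n.choose k : ℝ) * Real.exp (-(P * t * δ^2/2))) * NR^t := by
          push_cast
          ring
      _ < 1 * NR^t := by
          apply mul_lt_mul_of_pos_right hcond (by positivity)
      _ = NR ^ t := one_mul _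
  -- exists good M'
  have hex : ∃ M' : Fin t → Fin n → Fin k, ∀ pr ∈ Pairs, M' ∉ Bad pr := by
    by_contra hcon
    push_neg at hcon
    have hsub : (Finset.univ : Finset (Fin t → Fin n → Fin k)) ⊆ Pairs.biUnion Bad := by
      intro M' _
      obtain ⟨pr, hpr, hM'⟩ := hcon M'
      exact Finset.mem_biUnion.2 ⟨pr, hpr, hM'⟩
    have hcard := Finset.card_le_card hsub
    rw [Finset.card_univ] at hcard
    have : (Fintype.card (Fin t → Fin n → Fin k) : ℝ) ≤ ((Pairs.biUnion Bad).card : ℝ) := by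
      exact_mod_cast hcard
    rw [show Fintype.card (Fin t → Fin n → Fin k) = Fintype.card (Fin n → Fin k) ^ t by
      simp [Fintype.card_fun]] at this
    push_cast at this
    rw [← hNR] at this
    linarith
  obtain ⟨M', hM'⟩ := hex
  refine ⟨fun i j => decide (M' i j = z0), ?_⟩
  intro c hc
  set pr : (Σ _ : Finset (Fin n), Fin n) := ⟨Finset.image c Finset.univ, c ⟨0, hk⟩⟩ with hprdef
  have hprmem : pr ∈ Pairs := by
    rw [hPairs, Finset.mem_sigma]
    constructor
    · rw [Finset.mem_powersetCard_univ]
      rw [Finset.card_image_of_injective _ hc, Finset.card_univ, Fintype.card_fin]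
    · exact Finset.mem_image_of_mem c (Finset.mem_univ _)
  have hnb := hM' pr hprmem
  rw [hBad, Finset.mem_filter, not_and, not_lt] at hnb
  have hnb' := hnb (Finset.mem_univ _)
  have hsub : Finset.univ.filter (fun i => M' i ∈ Gp pr)
      ⊆ Finset.univ.filter (fun i : Fin t =>
          (decide (M' i (c ⟨0, hk⟩) = z0)) = true ∧
            ∀ j : Fin k, j ≠ ⟨0, hk⟩ → (decide (M' i (c j) = z0)) = false) := by
    intro i hi
    rw [Finset.mem_filter] at hi ⊢
    refine ⟨Finset.mem_univ _, ?_, ?_⟩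
    · rw [decide_eq_true_eq]
      rw [hGp, Finset.mem_filter] at hi
      exact hi.2.2.1
    · intro j hj
      rw [decide_eq_false_iff_not]
      rw [hGp, Finset.mem_filter] at hi
      apply hi.2.2.2
      rw [hprdef]
      exact Finset.mem_erase.2 ⟨fun e => hj (hc e), Finset.mem_image_of_mem c (Finset.mem_univ _)⟩
  calc ε * t / k = (1-δ)*P*t := hmeq.symm
    _ ≤ ((Finset.univ.filter (fun i => M' i ∈ Gp pr)).card : ℝ) := hnb'
    _ ≤ _ := by exact_mod_cast Nat.cast_le.2 (Finset.card_le_card hsub)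
end
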